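/- Let D be a simple pMC over a finite parameter set X with target set T, and let val : X → (0,1) be a graph-preserving valuation. Then Pr_{D[val]}(◇T) > 0 if and only if there exists a well-defined valuation val' : X → [0,1] with Pr_{D[val']}(◇T) > 0. -/

import Mathlib

/-- A finite path in state space `S`: a length `m` together with `m + 1` states. -/
abbrev MCPath (S : Type) : Type := Σ m : ℕ, Fin (m + 1) → S

/-- The mass of a path: the product of the transition probabilities along it. -/
def pathMass {S : Type} (P : S → S → ℝ) (π : MCPath S) : ℝ :=
  ∏ i : Fin π.1, P (π.2 i.castSucc) (π.2 i.succ)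

/-- A hitting path from `s` to `T`: it starts in `s`, ends in `T`, and no proper prefix
visits `T`. -/
def IsHitting {S : Type} (T : Set S) (s : S) (π : MCPath S) : Prop :=
  π.2 0 = s ∧ π.2 (Fin.last π.1) ∈ T ∧ ∀ i : Fin π.1, π.2 i.castSucc ∉ T

/-- The reachability probability `Pr_{P,s}(◇T)`: the sum of the masses of all hitting
paths from `s` to `T`. -/
noncomputable def reachProb {S : Type} (P : S → S → ℝ) (T : Set S) (s : S) : ℝ :=
  ∑' π : {π : MCPath S // IsHitting T s π}, pathMass P π.1

/-- An entry of a simple pMC: a nonnegative rational constant, a variable `x`, or `1 - x`. -/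
def SimpleEntry {X : Type} (p : MvPolynomial X ℚ) : Prop :=
  (∃ q : ℚ, 0 ≤ q ∧ p = MvPolynomial.C q) ∨
  (∃ x : X, p = MvPolynomial.X x) ∨
  (∃ x : X, p = 1 - MvPolynomial.X x)

/-- A simple parametric Markov chain over parameter set `X` with `n` states:
all transition polynomials are simple entries and every row sums to `1` as a polynomial. -/
structure SimplePMC (X : Type) (n : ℕ) where
  init : Fin n
  P : Fin n → Fin n → MvPolynomial X ℚ
  simple : ∀ s s', SimpleEntry (P s s')
  rowSum : ∀ s, ∑ s', P s s' = 1

/-- A valuation is well-defined if every parameter value lies in `[0,1]`. -/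
def WDVal {X : Type} (val : X → ℝ) : Prop := ∀ x, val x ∈ Set.Icc (0 : ℝ) 1

/-- A valuation is graph-preserving if every parameter value lies in `(0,1)`. -/
def GPVal {X : Type} (val : X → ℝ) : Prop := ∀ x, val x ∈ Set.Ioo (0 : ℝ) 1

/-- The transition matrix of the instantiation `D[val]`. -/
noncomputable def instP {X : Type} {n : ℕ} (D : SimplePMC X n) (val : X → ℝ) :
    Fin n → Fin n → ℝ :=
  fun s s' => MvPolynomial.aeval val (D.P s s')


/-!
If `Pr_{D[val']}(◇T) ≠ 0`, some hitting path has nonzero mass under `val'`. In a simple pMC a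
graph-preserving valuation makes every transition positive that is nonzero under some
valuation, so this path has positive mass under `val`. The masses of the hitting paths of a
substochastic matrix have finite partial sums at most `1`, so the series defining the
reachability probability is summable (not a junk `tsum`) and dominates each of its terms.
-/

open Finset

section Paths

variable {S : Type} {P : S → S → ℝ} {T : Set S}

def MCPath.cons (s : S) (σ : MCPath S) : MCPath S :=
  ⟨σ.1 + 1, (Fin.cons s σ.2 : Fin (σ.1 + 2) → S)⟩

lemma MCPath.cons_injective (s : S) : Function.Injective (MCPath.cons s) := by
  rintro ⟨m, f⟩ ⟨m', f'⟩ h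
  obtain ⟨hm, hf⟩ := Sigma.mk.inj_iff.mp h
  obtain rfl : m = m' := Nat.succ_injective hm
  obtain rfl := Fin.cons_right_injective (α := fun _ => S) s (eq_of_heq hf)
  rfl

lemma MCPath.exists_eq_cons {π : MCPath S} (h : π.1 ≠ 0) : ∃ σ, π = MCPath.cons (π.2 0) σ := by
  obtain ⟨_ | m, f⟩ := π
  · exact absurd rfl h
  · exact ⟨⟨m, Fin.tail f⟩, by rw [MCPath.cons, Fin.cons_self_tail]⟩

lemma MCPath.eq_of_length_eq_zero {π π' : MCPath S} (h : π.1 = 0) (h' : π'.1 = 0)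
    (h0 : π.2 0 = π'.2 0) : π = π' := by
  obtain ⟨m, f⟩ := π
  obtain ⟨m', f'⟩ := π'
  subst h h'
  congr
  funext i
  rwa [Fin.fin_one_eq_zero i]

lemma pathMass_nonneg (h0 : ∀ s s', 0 ≤ P s s') (π : MCPath S) : 0 ≤ pathMass P π :=
  prod_nonneg fun _ _ => h0 _ _

lemma pathMass_of_length_eq_zero {π : MCPath S} (h : π.1 = 0) : pathMass P π = 1 := by
  obtain ⟨m, f⟩ := π
  subst h
  simp [pathMass]

lemma pathMass_cons (s : S) (σ : MCPath S) :
    pathMass P (MCPath.cons s σ) = P s (σ.2 0) * pathMass P σ := by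
  rw [pathMass, MCPath.cons, Fin.prod_univ_succ]
  simp [pathMass]

lemma pathMass_pos_of_ne_zero {P' : S → S → ℝ} (hsupp : ∀ s s', P' s s' ≠ 0 → 0 < P s s')
    {π : MCPath S} (h : pathMass P' π ≠ 0) : 0 < pathMass P π :=
  prod_pos fun i hi => hsupp _ _ (prod_ne_zero_iff.mp h i hi)

lemma IsHitting.length_eq_zero_iff {s : S} {π : MCPath S} (h : IsHitting T s π) :
    π.1 = 0 ↔ s ∈ T := by
  obtain ⟨_ | m, f⟩ := π
  · exact iff_of_true rfl (h.1 ▸ h.2.1)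
  · exact iff_of_false (Nat.succ_ne_zero m) fun hs => h.2.2 0 (h.1 ▸ hs)

lemma isHitting_cons_iff {s : S} {σ : MCPath S} :
    IsHitting T s (MCPath.cons s σ) ↔ s ∉ T ∧ IsHitting T (σ.2 0) σ := by
  rw [IsHitting, MCPath.cons]
  simp [IsHitting, Fin.forall_fin_succ, ← Fin.succ_last, and_left_comm]

lemma sum_pathMass_le_one_of_length_eq_zero {s : S} {F : Finset (MCPath S)}
    (hF : ∀ π ∈ F, π.1 = 0 ∧ π.2 0 = s) : ∑ π ∈ F, pathMass P π ≤ 1 := by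
  have hcard : F.card ≤ 1 := card_le_one.mpr fun π hπ π' hπ' =>
    MCPath.eq_of_length_eq_zero (hF π hπ).1 (hF π' hπ').1 ((hF π hπ).2.trans (hF π' hπ').2.symm)
  rw [sum_congr rfl fun π hπ => pathMass_of_length_eq_zero (hF π hπ).1]
  simpa using hcard

lemma sum_pathMass_eq_sum_cons {s : S} {F : Finset (MCPath S)}
    (hF : ∀ π ∈ F, π.1 ≠ 0 ∧ π.2 0 = s) :
    ∑ π ∈ F, pathMass P π =
      ∑ σ ∈ F.preimage (MCPath.cons s) (MCPath.cons_injective s).injOn,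
        P s (σ.2 0) * pathMass P σ := by
  simp_rw [← pathMass_cons]
  refine (sum_preimage _ _ _ _ fun π hπ hrange => absurd ?_ hrange).symm
  obtain ⟨σ, hσ⟩ := MCPath.exists_eq_cons (hF π hπ).1
  exact ⟨σ, by rw [hσ, (hF π hπ).2]⟩

/-- Induction on the length bound `N`: a hitting path from `s ∉ T` is `s` followed by a
hitting path from its second state. -/
lemma sum_pathMass_isHitting_le_one [Fintype S] (h0 : ∀ s s', 0 ≤ P s s')
    (h1 : ∀ s, ∑ s', P s s' ≤ 1) (N : ℕ) (s : S) (F : Finset (MCPath S))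
    (hF : ∀ π ∈ F, IsHitting T s π ∧ π.1 ≤ N) : ∑ π ∈ F, pathMass P π ≤ 1 := by
  classical
  induction N generalizing s F with
  | zero =>
    exact sum_pathMass_le_one_of_length_eq_zero fun π hπ =>
      ⟨Nat.le_zero.mp (hF π hπ).2, (hF π hπ).1.1⟩
  | succ N ih =>
    by_cases hs : s ∈ T
    · exact sum_pathMass_le_one_of_length_eq_zero fun π hπ =>
        ⟨(hF π hπ).1.length_eq_zero_iff.mpr hs, (hF π hπ).1.1⟩
    have hlen : ∀ π ∈ F, π.1 ≠ 0 ∧ π.2 0 = s := fun π hπ =>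
      ⟨mt (hF π hπ).1.length_eq_zero_iff.mp hs, (hF π hπ).1.1⟩
    set G := F.preimage (MCPath.cons s) (MCPath.cons_injective s).injOn
    have hG : ∀ t, ∀ σ ∈ G.filter (fun σ => σ.2 0 = t), IsHitting T t σ ∧ σ.1 ≤ N := by
      intro t σ hσ
      obtain ⟨hσF, rfl⟩ := mem_filter.mp hσ
      obtain ⟨hhit, hN⟩ := hF _ (mem_preimage.mp hσF)
      exact ⟨(isHitting_cons_iff.mp hhit).2, Nat.succ_le_succ_iff.mp hN⟩
    calc ∑ π ∈ F, pathMass P π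
        = ∑ σ ∈ G, P s (σ.2 0) * pathMass P σ := sum_pathMass_eq_sum_cons hlen
      _ = ∑ t, ∑ σ ∈ G with σ.2 0 = t, P s (σ.2 0) * pathMass P σ :=
        (sum_fiberwise G (fun σ => σ.2 0) _).symm
      _ = ∑ t, P s t * ∑ σ ∈ G with σ.2 0 = t, pathMass P σ := by
        simp_rw [mul_sum]
        refine sum_congr rfl fun t _ => sum_congr rfl fun σ hσ => ?_
        rw [(mem_filter.mp hσ).2]
      _ ≤ ∑ t, P s t * 1 := by
        gcongr with t
        · exact h0 s t
        · exact ih t _ (hG t)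
      _ ≤ 1 := by simpa using h1 s

lemma summable_pathMass_isHitting [Fintype S] (h0 : ∀ s s', 0 ≤ P s s')
    (h1 : ∀ s, ∑ s', P s s' ≤ 1) (s : S) :
    Summable fun π : {π : MCPath S // IsHitting T s π} => pathMass P π.1 := by
  refine summable_of_sum_le (c := 1) (fun π => pathMass_nonneg h0 π.1) fun u => ?_
  refine (sum_map u (Function.Embedding.subtype _) (pathMass P)).symm.trans_le ?_
  refine sum_pathMass_isHitting_le_one (T := T) h0 h1 (u.sup fun π => π.1.1) s _ fun π hπ => ?_
  obtain ⟨σ, hσ, rfl⟩ := mem_map.mp hπ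
  exact ⟨σ.2, le_sup (f := fun π : {π : MCPath S // IsHitting T s π} => π.1.1) hσ⟩

lemma pathMass_le_reachProb [Fintype S] (h0 : ∀ s s', 0 ≤ P s s')
    (h1 : ∀ s, ∑ s', P s s' ≤ 1) {s : S} {π : MCPath S} (hπ : IsHitting T s π) :
    pathMass P π ≤ reachProb P T s :=
  (summable_pathMass_isHitting h0 h1 s).le_tsum ⟨π, hπ⟩ fun σ _ => pathMass_nonneg h0 σ.1

lemma exists_isHitting_pathMass_ne_zero {s : S} (h : reachProb P T s ≠ 0) :
    ∃ π, IsHitting T s π ∧ pathMass P π ≠ 0 := by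
  by_contra! hzero
  exact h ((tsum_congr fun π : {π // IsHitting T s π} => hzero π.1 π.2).trans tsum_zero)

end Paths

section Instantiation

variable {X : Type} {n : ℕ} (D : SimplePMC X n)

lemma GPVal.wdVal {val : X → ℝ} (hval : GPVal val) : WDVal val :=
  fun x => Set.Ioo_subset_Icc_self (hval x)

lemma instP_nonneg {val : X → ℝ} (hval : WDVal val) (s s' : Fin n) : 0 ≤ instP D val s s' := by
  rcases D.simple s s' with ⟨q, hq, hp⟩ | ⟨x, hp⟩ | ⟨x, hp⟩ <;>
    simp only [instP, hp, map_sub, map_one, MvPolynomial.aeval_C, MvPolynomial.aeval_X]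
  · simpa using hq
  · exact (hval x).1
  · linarith [(hval x).2]

lemma instP_row_sum (val : X → ℝ) (s : Fin n) : ∑ s', instP D val s s' = 1 := by
  simp only [instP, ← map_sum, D.rowSum s, map_one]

lemma instP_pos_of_ne_zero {val val' : X → ℝ} (hval : GPVal val) {s s' : Fin n}
    (h : instP D val' s s' ≠ 0) : 0 < instP D val s s' := by
  rcases D.simple s s' with ⟨q, hq, hp⟩ | ⟨x, hp⟩ | ⟨x, hp⟩ <;>
    simp only [instP, hp, map_sub, map_one, MvPolynomial.aeval_C, MvPolynomial.aeval_X] at h ⊢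
  · exact lt_of_le_of_ne (by simpa using hq) (Ne.symm h)
  · exact (hval x).1
  · linarith [(hval x).2]

end Instantiation

theorem gp_pos_reach_iff_exists_wd_pos_reach_general {X : Type} {n : ℕ}
    (D : SimplePMC X n) (T : Set (Fin n)) (val : X → ℝ) (hval : GPVal val) :
    reachProb (instP D val) T D.init > 0 ↔
    ∃ val' : X → ℝ, WDVal val' ∧ reachProb (instP D val') T D.init > 0 := by
  refine ⟨fun h => ⟨val, hval.wdVal, h⟩, ?_⟩
  rintro ⟨val', -, hpos⟩
  obtain ⟨π, hπ, hmass⟩ := exists_isHitting_pathMass_ne_zero hpos.ne'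
  calc 0 < pathMass (instP D val) π :=
        pathMass_pos_of_ne_zero (fun _ _ => instP_pos_of_ne_zero D hval) hmass
    _ ≤ reachProb (instP D val) T D.init :=
        pathMass_le_reachProb (instP_nonneg D hval.wdVal) (fun s => (instP_row_sum D val s).le) hπ

/-- Lemma 1 of the paper, specialized to simple pMCs: for a graph-preserving valuation `val`,
the reachability probability is positive iff it is positive for some well-defined valuation. -/
theorem gp_pos_reach_iff_exists_wd_pos_reach {X : Type} [Fintype X] {n : ℕ}
    (D : SimplePMC X n) (T : Set (Fin n)) (val : X → ℝ) (hval : GPVal val) :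
    reachProb (instP D val) T D.init > 0 ↔
    ∃ val' : X → ℝ, WDVal val' ∧ reachProb (instP D val') T D.init > 0 :=
  gp_pos_reach_iff_exists_wd_pos_reach_general D T val hval
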